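/- (User-privacy of the explicit scheme.) In the explicit SPIR scheme, for every database index n ∈ {1,…,N} and all message indices k, k' ∈ {1,…,K}, the tuples (Q_n^{[k]}, A_n^{[k]}, W_1, …, W_K, S) and (Q_n^{[k']}, A_n^{[k']}, W_1, …, W_K, S) are identically distributed; in particular, each query Q_n^{[k]} is uniformly distributed on (ZMod 2)^{(N−1)K} regardless of k. -/

import Mathlib

open Finset

attribute [local instance] Classical.propDecidable

/-- Probability that the random variable `X` takes the value `a`, on a finite
sample space `Ω` with probability mass function `p`. -/
noncomputable def prob {Ω α : Type*} [Fintype Ω] (p : Ω → ℝ) (X : Ω → α) (a : α) : ℝ :=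
  ∑ ω : Ω, if X ω = a then p ω else 0

/-- Shannon entropy (in bits) of the random variable `X`. -/
noncomputable def ent {Ω α : Type*} [Fintype Ω] [Fintype α] (p : Ω → ℝ) (X : Ω → α) : ℝ :=
  - ∑ a : α, prob p X a * Real.logb 2 (prob p X a)

/-- Conditional Shannon entropy (in bits) `H(X | Y)`. -/
noncomputable def condEnt {Ω α β : Type*} [Fintype Ω] [Fintype α] [Fintype β]
    (p : Ω → ℝ) (X : Ω → α) (Y : Ω → β) : ℝ :=
  ent p (fun ω => (X ω, Y ω)) - ent p Y

/-- Shannon mutual information (in bits) `I(X ; Y)`. -/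
noncomputable def mutInfo {Ω α β : Type*} [Fintype Ω] [Fintype α] [Fintype β]
    (p : Ω → ℝ) (X : Ω → α) (Y : Ω → β) : ℝ :=
  ent p X + ent p Y - ent p (fun ω => (X ω, Y ω))

/-- `X` and `Y` are identically distributed. -/
def IdentDist {Ω α : Type*} [Fintype Ω] (p : Ω → ℝ) (X Y : Ω → α) : Prop :=
  ∀ a : α, prob p X a = prob p Y a

/-- `X` is uniformly distributed on `α`. -/
def Unif {Ω α : Type*} [Fintype Ω] [Fintype α] (p : Ω → ℝ) (X : Ω → α) : Prop :=
  ∀ a : α, prob p X a = 1 / (Fintype.card α : ℝ)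

/-- The sample space of the explicit SPIR scheme: the message bits
`x = (x_{k,i})_{k ∈ [K], i ∈ [N−1]}`, the common-randomness bit `S`,
and the user-randomness bits `h = (h_{j,i})_{j ∈ [K], i ∈ [N−1]}`. -/
abbrev SchemeOmega (K N : ℕ) : Type :=
  (Fin K → Fin (N - 1) → ZMod 2) × ZMod 2 × (Fin K → Fin (N - 1) → ZMod 2)

/-- The uniform probability mass function on the sample space: all message bits, the
common-randomness bit and the user-randomness bits are i.i.d. uniform. -/
noncomputable def unifP (K N : ℕ) : SchemeOmega K N → ℝ :=
  fun _ => (Fintype.card (SchemeOmega K N) : ℝ)⁻¹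

/-- The query sent to database `n` when the desired message index is `k`:
`Q_1^[k] = h` for the first database (`n = 0`), and `Q_{m+1}^[k] = h + e_{k,m}` for
database `m + 1`, where `e_{k,m}` has a single `1` in coordinate `(k, m)`. -/
def query (K N : ℕ) (k : Fin K) (n : Fin N) (h : Fin K → Fin (N - 1) → ZMod 2) :
    Fin K → Fin (N - 1) → ZMod 2 :=
  fun j i => h j i + (if j = k ∧ (i : ℕ) + 1 = (n : ℕ) then 1 else 0)

/-- The answer of database `n`: the inner product `⟨Q_n^[k], x⟩` of the received query with
the message bits, plus the common-randomness bit `S`. -/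
def answer (K N : ℕ) (k : Fin K) (n : Fin N) (ω : SchemeOmega K N) : ZMod 2 :=
  (∑ j : Fin K, ∑ i : Fin (N - 1), query K N k n ω.2.2 j i * ω.1 j i) + ω.2.1

/-!
Shifting the user randomness `h` by `e_{k,n} + e_{k',n}` is a measure-preserving bijection of
the sample space that fixes the messages and `S` and turns the query for `k'` into the query
for `k` (bits have characteristic two); since the answer is a function of the query, the messages
and `S`, the two tuples have the same law. Uniformity of the query holds because it is a
translate of the uniform vector `h`.
-/

section UniformPMF

variable {Ω α : Type*} [Fintype Ω]

noncomputable def unifPMF (Ω : Type*) [Fintype Ω] : Ω → ℝ :=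
  fun _ => (Fintype.card Ω : ℝ)⁻¹

theorem identDist_comp_perm {p : Ω → ℝ} (σ : Equiv.Perm Ω) (hσ : ∀ ω, p (σ ω) = p ω)
    (X : Ω → α) : IdentDist p (X ∘ σ) X := fun a =>
  Fintype.sum_equiv σ _ _ fun ω => by simp only [Function.comp_apply, hσ]

theorem unif_unifPMF_equiv [Fintype α] (e : Ω ≃ α) : Unif (unifPMF Ω) e := fun a => by
  simp only [prob, unifPMF, ← e.eq_symm_apply, Finset.sum_ite_eq', Finset.mem_univ, if_true,
    Fintype.card_congr e, one_div]

theorem prob_unifPMF_comp_snd {A : Type*} [Fintype A] [Nonempty A] (f : Ω → α) (a : α) :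
    prob (unifPMF (A × Ω)) (fun ω => f ω.2) a = prob (unifPMF Ω) f a := by
  have hA : (Fintype.card A : ℝ) ≠ 0 := Nat.cast_ne_zero.mpr Fintype.card_ne_zero
  calc prob (unifPMF (A × Ω)) (fun ω => f ω.2) a
      = ∑ _x : A, (Fintype.card A : ℝ)⁻¹ * prob (unifPMF Ω) f a := by
        simp only [prob, unifPMF, Fintype.sum_prod_type, Finset.mul_sum, mul_ite, mul_zero,
          Fintype.card_prod, Nat.cast_mul, mul_inv]
    _ = prob (unifPMF Ω) f a := by
        rw [Finset.sum_const, Finset.card_univ, nsmul_eq_mul, ← mul_assoc, mul_inv_cancel₀ hA,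
          one_mul]

theorem Unif.comp_snd {A : Type*} [Fintype A] [Nonempty A] [Fintype α] {f : Ω → α}
    (hf : Unif (unifPMF Ω) f) : Unif (unifPMF (A × Ω)) (fun ω => f ω.2) := fun a => by
  rw [prob_unifPMF_comp_snd, hf]

end UniformPMF

section Scheme

variable {K N : ℕ}

def queryOffset (k : Fin K) (n : Fin N) : Fin K → Fin (N - 1) → ZMod 2 :=
  fun j i => if j = k ∧ (i : ℕ) + 1 = (n : ℕ) then 1 else 0

theorem query_eq_add (k : Fin K) (n : Fin N) (h : Fin K → Fin (N - 1) → ZMod 2) :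
    query K N k n h = h + queryOffset k n := rfl

theorem query_add_queryOffset_add (k k' : Fin K) (n : Fin N)
    (h : Fin K → Fin (N - 1) → ZMod 2) :
    query K N k' n (h + (queryOffset k n + queryOffset k' n)) = query K N k n h := by
  rw [query_eq_add, query_eq_add, add_assoc, add_assoc, ZModModule.add_self, add_zero]

def shiftUserRandomness (d : Fin K → Fin (N - 1) → ZMod 2) : Equiv.Perm (SchemeOmega K N) :=
  (Equiv.refl _).prodCongr ((Equiv.refl _).prodCongr (Equiv.addRight d))

def databaseView (k : Fin K) (n : Fin N) (ω : SchemeOmega K N) :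
    (Fin K → Fin (N - 1) → ZMod 2) × ZMod 2 × (Fin K → Fin (N - 1) → ZMod 2) × ZMod 2 :=
  (query K N k n ω.2.2, answer K N k n ω, ω.1, ω.2.1)

theorem databaseView_comp_shiftUserRandomness (k k' : Fin K) (n : Fin N) :
    databaseView k' n ∘ shiftUserRandomness (queryOffset k n + queryOffset k' n) =
      databaseView k n := by
  funext ω
  simp only [databaseView, Function.comp_apply, shiftUserRandomness, Equiv.prodCongr_apply, Equiv.coe_refl,
    Equiv.coe_addRight, Prod.map_fst, Prod.map_snd, id_eq, answer, query_add_queryOffset_add]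

theorem identDist_databaseView (k k' : Fin K) (n : Fin N) :
    IdentDist (unifP K N) (databaseView k n) (databaseView k' n) := by
  rw [← databaseView_comp_shiftUserRandomness k k' n]
  exact identDist_comp_perm _ (fun _ => rfl) _

theorem unif_query (k : Fin K) (n : Fin N) :
    Unif (unifP K N) (fun ω => query K N k n ω.2.2) :=
  (unif_unifPMF_equiv (Equiv.addRight (queryOffset k n))).comp_snd.comp_snd

end Scheme

theorem explicit_scheme_user_privacy (K N : ℕ) :
    ∀ (n : Fin N) (k k' : Fin K),
      IdentDist (unifP K N)
        (fun ω => (query K N k n ω.2.2, answer K N k n ω, ω.1, ω.2.1))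
        (fun ω => (query K N k' n ω.2.2, answer K N k' n ω, ω.1, ω.2.1)) ∧
      Unif (unifP K N) (fun ω => query K N k n ω.2.2) :=
  fun n k k' => ⟨identDist_databaseView k k' n, unif_query k n⟩
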